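/- arXiv:2206.00087 — 6 statements merged into one kernel-verified Lean document; each statement's English description precedes it below -/
import Mathlib

section
/- If (r,ρ) ∈ NC, then both B₃(r,ρ) = {r^k · ρ^ℓ | k is a non-negative integer and ℓ is a negative integer} and B₄(r,ρ) = {r^k · ρ^ℓ | k is a negative integer and ℓ is a non-negative integer} are nowhere dense subsets of (0,∞). -/
/-- `(r, ρ) ∈ NC` : the positive real numbers `r` and `ρ` "never connect", i.e.
`r < 1`, `ρ > 1` and for all integers `k` and `ℓ`, `r ^ k = ρ ^ ℓ` iff `k = ℓ = 0`. -/
def NeverConnect (r ρ : ℝ) : Prop :=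
  0 < r ∧ r < 1 ∧ 1 < ρ ∧ ∀ k ℓ : ℤ, r ^ k = ρ ^ ℓ ↔ k = 0 ∧ ℓ = 0

open Set

lemma zpow_exp_bddAbove {σ : ℝ} (hσ : 1 < σ) (M : ℝ) :
    ∃ N : ℤ, ∀ k : ℤ, σ ^ k ≤ M → k ≤ N := by
  obtain ⟨n, hn⟩ := pow_unbounded_of_one_lt M hσ
  refine ⟨n, fun k hk => ?_⟩
  by_contra hlt
  push_neg at hlt
  have : σ ^ (n : ℤ) ≤ σ ^ k := zpow_le_zpow_right₀ hσ.le (le_of_lt hlt)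
  rw [zpow_natCast] at this
  linarith

lemma b3_finite {r ρ : ℝ} (hr0 : 0 < r) (hr1 : r < 1) (hρ : 1 < ρ) {ε : ℝ} (hε : 0 < ε) :
    ({y : ℝ | ∃ k ℓ : ℤ, 0 ≤ k ∧ ℓ < 0 ∧ y = r ^ k * ρ ^ ℓ} ∩ Set.Ici ε).Finite := by
  have hσ : 1 < r⁻¹ := (one_lt_inv₀ hr0).mpr hr1
  obtain ⟨N₁, hN₁⟩ := zpow_exp_bddAbove hσ ε⁻¹
  obtain ⟨N₂, hN₂⟩ := zpow_exp_bddAbove hρ ε⁻¹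
  apply Set.Finite.subset (((Set.finite_Icc 0 N₁).prod (Set.finite_Icc (-N₂) (-1))).image
    (fun p : ℤ × ℤ => r ^ p.1 * ρ ^ p.2))
  rintro y ⟨⟨k, ℓ, hk, hℓ, rfl⟩, hy⟩
  have hkpos : 0 < r ^ k := zpow_pos hr0 k
  have hlpos : 0 < ρ ^ ℓ := zpow_pos (lt_trans one_pos hρ) ℓ
  have hρℓ1 : ρ ^ ℓ ≤ 1 := by
    have := zpow_le_zpow_right₀ hρ.le (le_of_lt hℓ)
    rwa [zpow_zero] at this
  have hrk1 : r ^ k ≤ 1 := by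
    have h1 : r ^ k = (r⁻¹ ^ k)⁻¹ := by rw [inv_zpow, inv_inv]
    have h2 : (1 : ℝ) ≤ r⁻¹ ^ k := by
      have := zpow_le_zpow_right₀ hσ.le hk
      rwa [zpow_zero] at this
    rw [h1]
    exact inv_le_one_of_one_le₀ h2
  have hεy : ε ≤ r ^ k * ρ ^ ℓ := hy
  have hεrk : ε ≤ r ^ k := le_trans hεy (mul_le_of_le_one_right hkpos.le hρℓ1)
  have hεrl : ε ≤ ρ ^ ℓ := le_trans hεy (mul_le_of_le_one_left hlpos.le hrk1)
  have hkN : k ≤ N₁ := by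
    apply hN₁
    rw [inv_zpow]
    exact inv_anti₀ hε hεrk
  have hlN : -ℓ ≤ N₂ := by
    apply hN₂
    rw [zpow_neg]
    exact inv_anti₀ hε hεrl
  exact ⟨(k, ℓ), ⟨⟨hk, hkN⟩, ⟨by linarith, by omega⟩⟩, rfl⟩

lemma b4_finite {r ρ : ℝ} (hr0 : 0 < r) (hr1 : r < 1) (hρ : 1 < ρ) (M : ℝ) :
    ({y : ℝ | ∃ k ℓ : ℤ, k < 0 ∧ 0 ≤ ℓ ∧ y = r ^ k * ρ ^ ℓ} ∩ Set.Iic M).Finite := by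
  have hσ : 1 < r⁻¹ := (one_lt_inv₀ hr0).mpr hr1
  obtain ⟨N₁, hN₁⟩ := zpow_exp_bddAbove hσ M
  obtain ⟨N₂, hN₂⟩ := zpow_exp_bddAbove hρ M
  apply Set.Finite.subset (((Set.finite_Icc (-N₁) (-1)).prod (Set.finite_Icc 0 N₂)).image
    (fun p : ℤ × ℤ => r ^ p.1 * ρ ^ p.2))
  rintro y ⟨⟨k, ℓ, hk, hℓ, rfl⟩, hy⟩
  have hkpos : 0 < r ^ k := zpow_pos hr0 k
  have hlpos : 0 < ρ ^ ℓ := zpow_pos (lt_trans one_pos hρ) ℓ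
  have hρℓ1 : (1 : ℝ) ≤ ρ ^ ℓ := by
    have := zpow_le_zpow_right₀ hρ.le hℓ
    rwa [zpow_zero] at this
  have hrk1 : (1 : ℝ) ≤ r ^ k := by
    have h1 : r ^ k = (r⁻¹ ^ k)⁻¹ := by rw [inv_zpow, inv_inv]
    have h2 : r⁻¹ ^ k ≤ 1 := by
      have := zpow_le_zpow_right₀ hσ.le (le_of_lt hk)
      rwa [zpow_zero] at this
    rw [h1]
    exact (one_le_inv₀ (zpow_pos (lt_trans one_pos hσ) k)).mpr h2
  have hyM : r ^ k * ρ ^ ℓ ≤ M := hy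
  have hrkM : r ^ k ≤ M := le_trans (le_mul_of_one_le_right hkpos.le hρℓ1) hyM
  have hrlM : ρ ^ ℓ ≤ M := le_trans (le_mul_of_one_le_left hlpos.le hrk1) hyM
  have hkN : -k ≤ N₁ := by
    apply hN₁
    rw [inv_zpow', neg_neg]
    exact hrkM
  exact ⟨(k, ℓ), ⟨⟨by omega, by omega⟩, ⟨hℓ, hN₂ ℓ hrlM⟩⟩, rfl⟩
/-- A set that is locally finite within `(0,∞)` pulls back to a nowhere dense
subset of the subtype `Ioi 0`. -/
lemma nowhereDense_of_locallyFinite (T : Set ℝ)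
    (hT : ∀ v : ℝ, 0 < v → ∃ a b : ℝ, a < v ∧ v < b ∧ (T ∩ Set.Ioo a b).Finite) :
    IsNowhereDense {x : Set.Ioi (0 : ℝ) | (x : ℝ) ∈ T} := by
  set S : Set (Set.Ioi (0 : ℝ)) := {x : Set.Ioi (0 : ℝ) | (x : ℝ) ∈ T} with hS
  have key : ∀ x : Set.Ioi (0 : ℝ), ∃ K : Set (Set.Ioi (0 : ℝ)),
      IsOpen K ∧ x ∈ K ∧ (S ∩ K).Finite := by
    intro x
    obtain ⟨a, b, hav, hvb, hfin⟩ := hT x.1 x.2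
    refine ⟨Subtype.val ⁻¹' Set.Ioo a b, (isOpen_Ioo).preimage continuous_subtype_val,
      ⟨hav, hvb⟩, ?_⟩
    have : S ∩ Subtype.val ⁻¹' Set.Ioo a b = Subtype.val ⁻¹' (T ∩ Set.Ioo a b) := by
      ext y; simp [hS]
    rw [this]
    exact hfin.preimage (Subtype.val_injective.injOn)
  have hclosed : IsClosed S := by
    rw [← isOpen_compl_iff, isOpen_iff_mem_nhds]
    intro x hx
    obtain ⟨K, hKopen, hxK, hfin⟩ := key x
    have hfc : IsClosed (S ∩ K) := hfin.isClosed
    have hmem : K ∩ (S ∩ K)ᶜ ∈ nhds x := by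
      refine Filter.inter_mem (hKopen.mem_nhds hxK) ?_
      exact hfc.isOpen_compl.mem_nhds (fun hmem => hx hmem.1)
    refine Filter.mem_of_superset hmem ?_
    rintro y ⟨hyK, hyn⟩ hyS
    exact hyn ⟨hyS, hyK⟩
  have hint : interior S = ∅ := by
    by_contra hne
    obtain ⟨x, hx⟩ := Set.nonempty_iff_ne_empty.mpr hne
    obtain ⟨K, hKopen, hxK, hfin⟩ := key x
    have hopen : IsOpen (interior S ∩ K) := isOpen_interior.inter hKopen
    have hxin : x ∈ interior S ∩ K := ⟨hx, hxK⟩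
    have hx0 : (0 : ℝ) < x.1 := x.2
    obtain ⟨U, hUopen, hUeq⟩ := isOpen_induced_iff.mp hopen
    have hxU : (x : ℝ) ∈ U := by rw [← hUeq] at hxin; exact hxin
    obtain ⟨δ, hδ, hball⟩ := Metric.isOpen_iff.mp hUopen _ hxU
    set lo := max (x.1 - δ) (x.1 / 2) with hlo
    have hlox : lo < x.1 := max_lt (by linarith) (by linarith)
    have hlopos : 0 < lo := lt_of_lt_of_le (by linarith) (le_max_right _ _)
    have hval : Set.Ioo lo x.1 ⊆ Subtype.val '' (S ∩ K) := by
      intro y hy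
      have hy0 : 0 < y := lt_trans hlopos hy.1
      have hyU : y ∈ U := by
        apply hball
        rw [Metric.mem_ball, Real.dist_eq, abs_lt]
        have h1 : x.1 - δ ≤ lo := le_max_left _ _
        constructor <;> [linarith [hy.1]; linarith [hy.2]]
      have hmem : (⟨y, hy0⟩ : Set.Ioi (0 : ℝ)) ∈ interior S ∩ K := by
        rw [← hUeq]; exact hyU
      exact ⟨⟨y, hy0⟩, ⟨interior_subset hmem.1, hmem.2⟩, rfl⟩
    have hinf : (Set.Ioo lo x.1).Infinite := Set.Ioo_infinite hlox
    exact hinf ((hfin.image _).subset hval)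
  rw [IsNowhereDense, hclosed.closure_eq, hint]

/-- If `(r, ρ) ∈ NC`, then both
`B₃(r,ρ) = {r ^ k * ρ ^ ℓ | k a non-negative integer, ℓ a negative integer}` and
`B₄(r,ρ) = {r ^ k * ρ ^ ℓ | k a negative integer, ℓ a non-negative integer}`
are nowhere dense subsets of the space `(0, ∞)`. -/
theorem b3_b4_nowhereDense_of_neverConnect (r ρ : ℝ) (h : NeverConnect r ρ) :
    IsNowhereDense
      {x : Set.Ioi (0 : ℝ) | ∃ k ℓ : ℤ, 0 ≤ k ∧ ℓ < 0 ∧ (x : ℝ) = r ^ k * ρ ^ ℓ} ∧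
    IsNowhereDense
      {x : Set.Ioi (0 : ℝ) | ∃ k ℓ : ℤ, k < 0 ∧ 0 ≤ ℓ ∧ (x : ℝ) = r ^ k * ρ ^ ℓ} := by
  obtain ⟨hr0, hr1, hρ, -⟩ := h
  constructor
  · apply nowhereDense_of_locallyFinite
      {y : ℝ | ∃ k ℓ : ℤ, 0 ≤ k ∧ ℓ < 0 ∧ y = r ^ k * ρ ^ ℓ}
    intro v hv
    refine ⟨v / 2, v + 1, by linarith, by linarith, ?_⟩
    exact (b3_finite hr0 hr1 hρ (by linarith : (0:ℝ) < v / 2)).subset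
      (Set.inter_subset_inter_right _ (fun y hy => hy.1.le))
  · apply nowhereDense_of_locallyFinite
      {y : ℝ | ∃ k ℓ : ℤ, k < 0 ∧ 0 ≤ ℓ ∧ y = r ^ k * ρ ^ ℓ}
    intro v hv
    refine ⟨v / 2, v + 1, by linarith, by linarith, ?_⟩
    exact (b4_finite hr0 hr1 hρ (v + 1)).subset
      (Set.inter_subset_inter_right _ (fun y hy => hy.2.le))
end

section
/- If (r,ρ) ∈ NC, then for all x, y ∈ B₂(r,ρ) with x < y, the open interval (x,y) contains a point of B₁(r,ρ). -/
/-- There is a nonzero element `k•a + ℓ•b` (nonnegative coefficients) of arbitrarily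
small absolute value. -/
lemma nc_small_elt (a b : ℝ) (ha : a < 0) (hb : 0 < b)
    (hirr : ∀ m n : ℤ, (m : ℝ) * a = (n : ℝ) * b → m = 0 ∧ n = 0)
    {ε : ℝ} (hε : 0 < ε) :
    ∃ k ℓ : ℕ, (k : ℝ) * a + (ℓ : ℝ) * b ≠ 0 ∧ |(k : ℝ) * a + (ℓ : ℝ) * b| < ε := by
  have hna : 0 < -a := by linarith
  set θ : ℝ := b / (-a) with hθdef
  have hθ : 0 < θ := div_pos hb hna
  obtain ⟨n, hn⟩ := exists_nat_gt (-a / ε)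
  have hn1 : 0 < n + 1 := Nat.succ_pos n
  obtain ⟨j, k, hk0, hkn, hjk⟩ := Real.exists_int_int_abs_mul_sub_le θ hn1
  -- `0 < k ≤ n+1`, `|k*θ - j| ≤ 1/(n+2)`
  have hkθ : 0 < (k : ℝ) * θ := mul_pos (by exact_mod_cast hk0) hθ
  have hsmall : |(k : ℝ) * θ - j| ≤ 1 / (n + 2) := by
    have e : (1 : ℝ) / ((n : ℝ) + 2) = 1 / ((((n : ℕ) + 1 : ℕ) : ℝ) + 1) := by
      push_cast; ring
    rw [e]; exact hjk
  have hhalf : (1 : ℝ) / (n + 2) ≤ 1 / 2 := by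
    apply one_div_le_one_div_of_le <;> [norm_num; (push_cast; linarith [Nat.cast_nonneg (α := ℝ) n])]
  have hj0 : 0 ≤ j := by
    by_contra hj
    push_neg at hj
    have : (j : ℝ) ≤ -1 := by exact_mod_cast Int.le_of_lt_add_one (by simpa using hj)
    have h1 : (k : ℝ) * θ - j ≥ 1 := by linarith
    have := le_abs_self ((k : ℝ) * θ - j)
    linarith [hsmall.trans hhalf]
  -- the element
  have hj' : (j.toNat : ℝ) = (j : ℝ) := by exact_mod_cast Int.toNat_of_nonneg hj0
  have hk' : (k.toNat : ℝ) = (k : ℝ) := by exact_mod_cast Int.toNat_of_nonneg hk0.le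
  refine ⟨j.toNat, k.toNat, ?_, ?_⟩
  · -- nonzero
    intro h0
    rw [hj', hk'] at h0
    have : ((-j : ℤ) : ℝ) * a = (k : ℝ) * b := by push_cast; linarith
    obtain ⟨h1, h2⟩ := hirr (-j) k this
    exact absurd h2 (by exact_mod_cast hk0.ne')
  · have hval : (j.toNat : ℝ) * a + (k.toNat : ℝ) * b = ((k : ℝ) * θ - j) * (-a) := by
      rw [hj', hk', hθdef, sub_mul, mul_assoc, div_mul_cancel₀ b hna.ne']
      ring
    rw [hval, abs_mul, abs_of_pos hna]
    calc |(k : ℝ) * θ - j| * (-a) ≤ 1 / (n + 2) * (-a) := by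
          exact mul_le_mul_of_nonneg_right hsmall hna.le
      _ < ε := by
          rw [div_mul_eq_mul_div, one_mul, div_lt_iff₀ (by positivity)]
          have : -a / ε < n + 2 := by push_cast; linarith
          calc -a = (-a / ε) * ε := by field_simp
            _ < (n + 2 : ℝ) * ε := by
                exact mul_lt_mul_of_pos_right this hε
            _ = ε * (n + 2) := by ring
  
/-- Density of the `ℕ`-semigroup generated by `a < 0 < b` with irrational ratio. -/
lemma nc_dense (a b : ℝ) (ha : a < 0) (hb : 0 < b)
    (hirr : ∀ m n : ℤ, (m : ℝ) * a = (n : ℝ) * b → m = 0 ∧ n = 0)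
    (u v : ℝ) (huv : u < v) :
    ∃ k ℓ : ℕ, (k : ℝ) * a + (ℓ : ℝ) * b ∈ Set.Ioo u v := by
  obtain ⟨k, ℓ, hs0, hsε⟩ := nc_small_elt a b ha hb hirr (sub_pos.mpr huv)
  set s : ℝ := (k : ℝ) * a + (ℓ : ℝ) * b with hs
  rcases hs0.lt_or_gt with hneg | hpos
  · -- s < 0 : step downward from a large multiple of b
    obtain ⟨L, hL⟩ := exists_nat_gt ((u - s) / b)
    have hLb : u - s < (L : ℝ) * b := by
      rw [div_lt_iff₀ hb] at hL; linarith
    obtain ⟨m, hm, -⟩ := existsUnique_add_zsmul_mem_Ioc (neg_pos.mpr hneg) ((L : ℝ) * b) u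
    obtain ⟨hm1, hm2⟩ := hm
    have hmneg : m < 0 := by
      by_contra hm0
      push_neg at hm0
      have : 0 ≤ (m : ℝ) * (-s) := mul_nonneg (by exact_mod_cast hm0) (by linarith)
      rw [zsmul_eq_mul] at hm2
      have habs : |s| = -s := abs_of_neg hneg
      rw [habs] at hsε
      linarith
    set M : ℕ := (-m).toNat with hM
    have hMm : (M : ℝ) = -(m : ℝ) := by
      have h' : ((-m).toNat : ℤ) = -m := Int.toNat_of_nonneg (by omega)
      rw [hM]; exact_mod_cast h'
    refine ⟨M * k, L + M * ℓ, ?_, ?_⟩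
    · -- > u
      have : (L : ℝ) * b + m • (-s) = ((M * k : ℕ) : ℝ) * a + ((L + M * ℓ : ℕ) : ℝ) * b := by
        rw [zsmul_eq_mul]; push_cast [hMm]
        rw [hs]; push_cast at hMm ⊢; nlinarith [hMm]
      rw [← this]; exact hm1
    · -- < v
      have habs : |s| = -s := abs_of_neg hneg
      rw [habs] at hsε
      have : (L : ℝ) * b + m • (-s) = ((M * k : ℕ) : ℝ) * a + ((L + M * ℓ : ℕ) : ℝ) * b := by
        rw [zsmul_eq_mul]; push_cast [hMm]
        rw [hs]; push_cast at hMm ⊢; nlinarith [hMm]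
      rw [← this]; linarith [hm2]
  · -- s > 0 : step upward from a large multiple of a
    obtain ⟨K, hK⟩ := exists_nat_gt (u / a)
    have hKa : (K : ℝ) * a < u := by
      have := mul_lt_mul_of_neg_right hK ha
      rw [div_mul_cancel₀ u ha.ne] at this
      linarith
    obtain ⟨m, hm, -⟩ := existsUnique_add_zsmul_mem_Ioc hpos ((K : ℝ) * a) u
    obtain ⟨hm1, hm2⟩ := hm
    have hmpos : 0 < m := by
      by_contra hm0
      push_neg at hm0
      have : (m : ℝ) * s ≤ 0 := mul_nonpos_of_nonpos_of_nonneg (by exact_mod_cast hm0) hpos.le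
      rw [zsmul_eq_mul] at hm1
      linarith
    set M : ℕ := m.toNat with hM
    have hMm : (M : ℝ) = (m : ℝ) := by
      have h' : (m.toNat : ℤ) = m := Int.toNat_of_nonneg hmpos.le
      rw [hM]; exact_mod_cast h'
    have heq : (K : ℝ) * a + m • s = ((K + M * k : ℕ) : ℝ) * a + ((M * ℓ : ℕ) : ℝ) * b := by
      rw [zsmul_eq_mul, hs]; push_cast [hMm]; ring
    refine ⟨K + M * k, M * ℓ, ?_, ?_⟩
    · rw [← heq]; exact hm1
    · rw [← heq]
      have habs : |s| = s := abs_of_pos hpos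
      rw [habs] at hsε
      linarith [hm2]

/-- If `(r, ρ) ∈ NC`, then for all `x, y ∈ B₂(r,ρ)` (products `r ^ k * ρ ^ ℓ` with `k, ℓ`
negative integers) with `x < y`, the open interval `(x, y)` contains a point of
`B₁(r,ρ) = {r ^ k * ρ ^ ℓ | k, ℓ non-negative integers}`. -/
theorem b1_point_between_b2_points_of_neverConnect (r ρ : ℝ) (h : NeverConnect r ρ)
    (x y : ℝ)
    (hx : ∃ k ℓ : ℤ, k < 0 ∧ ℓ < 0 ∧ x = r ^ k * ρ ^ ℓ)
    (hy : ∃ k ℓ : ℤ, k < 0 ∧ ℓ < 0 ∧ y = r ^ k * ρ ^ ℓ)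
    (hxy : x < y) :
    ∃ z ∈ Set.Ioo x y, ∃ k ℓ : ℕ, z = r ^ k * ρ ^ ℓ := by
  obtain ⟨hr0, hr1, hρ1, hNC⟩ := h
  have hρ0 : (0 : ℝ) < ρ := lt_trans one_pos hρ1
  set a : ℝ := Real.log r with hadef
  set b : ℝ := Real.log ρ with hbdef
  have ha : a < 0 := Real.log_neg hr0 hr1
  have hb : 0 < b := Real.log_pos hρ1
  have hirr : ∀ m n : ℤ, (m : ℝ) * a = (n : ℝ) * b → m = 0 ∧ n = 0 := by
    intro m n hmn
    have hpow : r ^ m = ρ ^ n := by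
      have h1 : Real.log (r ^ m) = Real.log (ρ ^ n) := by
        rw [Real.log_zpow, Real.log_zpow]; exact hmn
      have := Real.log_injOn_pos (by
          simp [Set.mem_Ioi]; positivity) (by
          simp [Set.mem_Ioi]; positivity) h1
      exact this
    exact (hNC m n).mp hpow
  obtain ⟨k₁, ℓ₁, -, -, hxe⟩ := hx
  obtain ⟨k₂, ℓ₂, -, -, hye⟩ := hy
  have hx0 : 0 < x := by rw [hxe]; positivity
  have hy0 : 0 < y := by rw [hye]; positivity
  obtain ⟨k, ℓ, hkl⟩ := nc_dense a b ha hb hirr (Real.log x) (Real.log y)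
    ((Real.log_lt_log_iff hx0 hy0).mpr hxy)
  refine ⟨r ^ k * ρ ^ ℓ, ?_, k, ℓ, rfl⟩
  have hz0 : (0 : ℝ) < r ^ k * ρ ^ ℓ := by positivity
  have hlogz : Real.log (r ^ k * ρ ^ ℓ) = (k : ℝ) * a + (ℓ : ℝ) * b := by
    rw [Real.log_mul (by positivity) (by positivity), Real.log_pow, Real.log_pow]
  obtain ⟨h1, h2⟩ := hkl
  constructor
  · exact (Real.log_lt_log_iff hx0 hz0).mp (by rw [hlogz]; exact h1)
  · exact (Real.log_lt_log_iff hz0 hy0).mp (by rw [hlogz]; exact h2)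
end

section
/- If (r,ρ) ∈ NC, then the set B₁(r,ρ) = {r^k · ρ^ℓ | k and ℓ are non-negative integers} is dense in the interval (0,∞). -/
lemma exists_small_elt (a b : ℝ) (ha : a < 0) (hb : 0 < b)
    (hirr : ∀ k ℓ : ℤ, (k : ℝ) * a = (ℓ : ℝ) * b → k = 0 ∧ ℓ = 0)
    {ε : ℝ} (hε : 0 < ε) :
    ∃ k ℓ : ℕ, (k : ℝ) * a + (ℓ : ℝ) * b ≠ 0 ∧ |(k : ℝ) * a + (ℓ : ℝ) * b| < ε := by
  set c : ℝ := -a with hc_def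
  have hc : 0 < c := by simpa [hc_def] using ha
  set g : ℕ → ℝ := fun ℓ => Int.fract ((ℓ : ℝ) * b / c) with hg_def
  -- injectivity of g
  have hg_inj : Function.Injective g := by
    intro m n hmn
    by_contra hne
    obtain ⟨z, hz⟩ := Int.fract_eq_fract.mp hmn
    rw [div_sub_div_same, div_eq_iff hc.ne'] at hz
    rw [hc_def] at hz
    have hz' : ((-z : ℤ) : ℝ) * a = (((m : ℤ) - n : ℤ) : ℝ) * b := by
      push_cast
      nlinarith [hz]
    obtain ⟨h1, h2⟩ := hirr _ _ hz'
    have : (m : ℤ) = n := by omega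
    exact hne (by exact_mod_cast this)
  -- pigeonhole
  obtain ⟨N, hN⟩ := exists_nat_gt (c / ε)
  have hN0 : 0 < N := by
    have h1 : (0 : ℝ) < c / ε := div_pos hc hε
    have : (0 : ℝ) < N := h1.trans hN
    exact_mod_cast this
  have hNR : (0:ℝ) < N := Nat.cast_pos.mpr hN0
  have hgmem : ∀ ℓ : ℕ, g ℓ ∈ Set.Ico (0 : ℝ) 1 := fun ℓ =>
    ⟨Int.fract_nonneg _, Int.fract_lt_one _⟩
  have hbucket : ∀ ℓ : ℕ, (⌊(N : ℝ) * g ℓ⌋).toNat < N := by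
    intro ℓ
    have h1 : (N : ℝ) * g ℓ < N := by nlinarith [(hgmem ℓ).2]
    have h2 : ⌊(N : ℝ) * g ℓ⌋ < (N : ℤ) := Int.floor_lt.mpr (by exact_mod_cast h1)
    omega
  set f : ℕ → Fin N := fun ℓ => ⟨(⌊(N : ℝ) * g ℓ⌋).toNat, hbucket ℓ⟩ with hf_def
  obtain ⟨m, n, hmn, hfeq⟩ := Finite.exists_ne_map_eq_of_infinite f
  wlog hlt : n < m generalizing m n
  · exact this n m hmn.symm hfeq.symm (by omega)
  -- floors equal, so the two fractional parts are within 1/N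
  have hfl : ⌊(N : ℝ) * g m⌋ = ⌊(N : ℝ) * g n⌋ := by
    have h1 : (⌊(N : ℝ) * g m⌋).toNat = (⌊(N : ℝ) * g n⌋).toNat := by
      simpa [hf_def] using congrArg Fin.val hfeq
    have h2 : (0:ℤ) ≤ ⌊(N : ℝ) * g m⌋ :=
      Int.floor_nonneg.mpr (mul_nonneg (Nat.cast_nonneg N) (hgmem m).1)
    have h3 : (0:ℤ) ≤ ⌊(N : ℝ) * g n⌋ :=
      Int.floor_nonneg.mpr (mul_nonneg (Nat.cast_nonneg N) (hgmem n).1)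
    omega
  have habs : |(N : ℝ) * g m - (N : ℝ) * g n| < 1 := Int.abs_sub_lt_one_of_floor_eq_floor hfl
  have habs' : |g m - g n| < 1 / N := by
    rw [← mul_sub, abs_mul, abs_of_pos hNR] at habs
    rw [lt_div_iff₀ hNR]
    linarith [habs]
  -- the small element
  set K : ℕ → ℤ := fun ℓ => ⌊(ℓ : ℝ) * b / c⌋ with hK_def
  have hKval : ∀ ℓ : ℕ, c * g ℓ = (ℓ : ℝ) * b - (K ℓ : ℝ) * c := by
    intro ℓ
    rw [hg_def, hK_def]
    simp only [Int.fract]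
    field_simp
  have hKmono : K n ≤ K m := by
    apply Int.floor_le_floor
    gcongr
  have hcast : (((K m - K n).toNat : ℕ) : ℝ) * a + (((m - n : ℕ)) : ℝ) * b
      = c * (g m - g n) := by
    have h1 : (((K m - K n).toNat : ℕ) : ℝ) = (K m : ℝ) - (K n : ℝ) := by
      have h0 : (((K m - K n).toNat : ℤ) : ℝ) = ((K m - K n : ℤ) : ℝ) := by
        rw [Int.toNat_of_nonneg (sub_nonneg.mpr hKmono)]
      push_cast at h0 ⊢
      linarith
    have h2 : (((m - n : ℕ)) : ℝ) = (m : ℝ) - (n : ℝ) := by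
      rw [Nat.cast_sub hlt.le]
    rw [h1, h2, mul_sub, hKval m, hKval n, hc_def]
    ring
  refine ⟨(K m - K n).toNat, m - n, ?_, ?_⟩
  · rw [hcast]
    exact mul_ne_zero hc.ne' (sub_ne_zero.mpr (fun hgeq => hmn (hg_inj hgeq)))
  · rw [hcast, abs_mul, abs_of_pos hc]
    have : c * |g m - g n| < c * (1 / N) := by
      exact mul_lt_mul_of_pos_left habs' hc
    have h2 : c * (1 / N) < ε := by
      rw [div_lt_iff₀ hε] at hN
      calc c * (1 / N) = c / N := by ring
        _ < ε := by rw [div_lt_iff₀ hNR]; nlinarith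
    exact this.trans h2


lemma pos_of_neg_elt (a b : ℝ) (ha : a < 0) (hb : 0 < b)
    (hirr : ∀ k ℓ : ℤ, (k : ℝ) * a = (ℓ : ℝ) * b → k = 0 ∧ ℓ = 0)
    {ε : ℝ} (hε : 0 < ε) {k₁ ℓ₁ : ℕ}
    (hs1 : -ε < (k₁ : ℝ) * a + (ℓ₁ : ℝ) * b) (hs2 : (k₁ : ℝ) * a + (ℓ₁ : ℝ) * b < 0) :
    ∃ k ℓ : ℕ, 0 < (k : ℝ) * a + (ℓ : ℝ) * b ∧ (k : ℝ) * a + (ℓ : ℝ) * b < ε := by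
  set s : ℝ := (k₁ : ℝ) * a + (ℓ₁ : ℝ) * b with hs_def
  have hns : 0 < -s := by linarith
  set n : ℕ := (⌊b / (-s)⌋).toNat with hn_def
  have hfl0 : (0:ℤ) ≤ ⌊b / (-s)⌋ := Int.floor_nonneg.mpr (le_of_lt (div_pos hb hns))
  have hnR : (n : ℝ) = (⌊b / (-s)⌋ : ℝ) := by
    rw [hn_def]
    exact_mod_cast congrArg (Int.cast : ℤ → ℝ) (Int.toNat_of_nonneg hfl0)
  have h1 : (n : ℝ) ≤ b / (-s) := hnR ▸ Int.floor_le _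
  have h2 : b / (-s) < (n : ℝ) + 1 := by rw [hnR]; push_cast; exact Int.lt_floor_add_one _
  have h1' : (n : ℝ) * (-s) ≤ b := (le_div_iff₀ hns).mp h1
  have h2' : b < ((n : ℝ) + 1) * (-s) := (div_lt_iff₀ hns).mp h2
  refine ⟨n * k₁, 1 + n * ℓ₁, ?_, ?_⟩
  · -- value is b + n * s
    have hval : ((n * k₁ : ℕ) : ℝ) * a + ((1 + n * ℓ₁ : ℕ) : ℝ) * b = b + (n : ℝ) * s := by
      push_cast; rw [hs_def]; ring
    rw [hval]
    rcases lt_or_eq_of_le (by linarith : (0:ℝ) ≤ b + (n:ℝ) * s) with h | h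
    · exact h
    · exfalso
      have hz : (((n * k₁ : ℕ) : ℤ) : ℝ) * a = ((-(1 + n * ℓ₁ : ℕ) : ℤ) : ℝ) * b := by
        push_cast; rw [hs_def] at h; nlinarith [h]
      obtain ⟨_, h4⟩ := hirr _ _ hz
      omega
  · have hval : ((n * k₁ : ℕ) : ℝ) * a + ((1 + n * ℓ₁ : ℕ) : ℝ) * b = b + (n : ℝ) * s := by
      push_cast; rw [hs_def]; ring
    rw [hval]; linarith

lemma neg_of_pos_elt (a b : ℝ) (ha : a < 0) (hb : 0 < b)
    (hirr : ∀ k ℓ : ℤ, (k : ℝ) * a = (ℓ : ℝ) * b → k = 0 ∧ ℓ = 0)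
    {ε : ℝ} (hε : 0 < ε) {k₁ ℓ₁ : ℕ}
    (hs1 : 0 < (k₁ : ℝ) * a + (ℓ₁ : ℝ) * b) (hs2 : (k₁ : ℝ) * a + (ℓ₁ : ℝ) * b < ε) :
    ∃ k ℓ : ℕ, -ε < (k : ℝ) * a + (ℓ : ℝ) * b ∧ (k : ℝ) * a + (ℓ : ℝ) * b < 0 := by
  set s : ℝ := (k₁ : ℝ) * a + (ℓ₁ : ℝ) * b with hs_def
  set n : ℕ := (⌊(-a) / s⌋).toNat with hn_def
  have hna : 0 < -a := by linarith
  have hfl0 : (0:ℤ) ≤ ⌊(-a) / s⌋ := Int.floor_nonneg.mpr (le_of_lt (div_pos hna hs1))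
  have hnR : (n : ℝ) = (⌊(-a) / s⌋ : ℝ) := by
    rw [hn_def]
    exact_mod_cast congrArg (Int.cast : ℤ → ℝ) (Int.toNat_of_nonneg hfl0)
  have h1 : (n : ℝ) ≤ (-a) / s := hnR ▸ Int.floor_le _
  have h2 : (-a) / s < (n : ℝ) + 1 := by rw [hnR]; push_cast; exact Int.lt_floor_add_one _
  have h1' : (n : ℝ) * s ≤ -a := (le_div_iff₀ hs1).mp h1
  have h2' : -a < ((n : ℝ) + 1) * s := (div_lt_iff₀ hs1).mp h2
  refine ⟨1 + n * k₁, n * ℓ₁, ?_, ?_⟩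
  · have hval : ((1 + n * k₁ : ℕ) : ℝ) * a + ((n * ℓ₁ : ℕ) : ℝ) * b = a + (n : ℝ) * s := by
      push_cast; rw [hs_def]; ring
    rw [hval]; linarith
  · have hval : ((1 + n * k₁ : ℕ) : ℝ) * a + ((n * ℓ₁ : ℕ) : ℝ) * b = a + (n : ℝ) * s := by
      push_cast; rw [hs_def]; ring
    rw [hval]
    rcases lt_or_eq_of_le (by linarith : a + (n:ℝ) * s ≤ 0) with h | h
    · exact h
    · exfalso
      have hz : (((1 + n * k₁ : ℕ) : ℤ) : ℝ) * a = ((-(n * ℓ₁ : ℕ) : ℤ) : ℝ) * b := by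
        push_cast; rw [hs_def] at h; nlinarith [h]
      obtain ⟨h3, _⟩ := hirr _ _ hz
      omega

lemma exists_approx (a b : ℝ) (ha : a < 0) (hb : 0 < b)
    (hirr : ∀ k ℓ : ℤ, (k : ℝ) * a = (ℓ : ℝ) * b → k = 0 ∧ ℓ = 0)
    (t : ℝ) {ε : ℝ} (hε : 0 < ε) :
    ∃ k ℓ : ℕ, |((k : ℝ) * a + (ℓ : ℝ) * b) - t| < ε := by
  obtain ⟨k₀, ℓ₀, hd0, hdε⟩ := exists_small_elt a b ha hb hirr hε
  set d : ℝ := (k₀ : ℝ) * a + (ℓ₀ : ℝ) * b with hd_def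
  -- get small elements of both signs
  have hboth : (∃ k ℓ : ℕ, 0 < (k : ℝ) * a + (ℓ : ℝ) * b ∧ (k : ℝ) * a + (ℓ : ℝ) * b < ε) ∧
      (∃ k ℓ : ℕ, -ε < (k : ℝ) * a + (ℓ : ℝ) * b ∧ (k : ℝ) * a + (ℓ : ℝ) * b < 0) := by
    rcases lt_or_gt_of_ne hd0 with hneg | hpos
    · have h1 : -ε < d := by rw [abs_lt] at hdε; exact hdε.1
      exact ⟨pos_of_neg_elt a b ha hb hirr hε h1 hneg,
        ⟨k₀, ℓ₀, h1, hneg⟩⟩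
    · have h1 : d < ε := by rw [abs_lt] at hdε; exact hdε.2
      exact ⟨⟨k₀, ℓ₀, hpos, h1⟩,
        neg_of_pos_elt a b ha hb hirr hε hpos h1⟩
  obtain ⟨⟨kp, ℓp, hp1, hp2⟩, ⟨km, ℓm, hm1, hm2⟩⟩ := hboth
  rcases le_or_gt 0 t with ht | ht
  · -- use positive small element
    set s : ℝ := (kp : ℝ) * a + (ℓp : ℝ) * b with hs_def
    set n : ℕ := (⌊t / s⌋).toNat with hn_def
    have hfl0 : (0:ℤ) ≤ ⌊t / s⌋ := Int.floor_nonneg.mpr (div_nonneg ht hp1.le)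
    have hnR : (n : ℝ) = (⌊t / s⌋ : ℝ) := by
      rw [hn_def]
      exact_mod_cast congrArg (Int.cast : ℤ → ℝ) (Int.toNat_of_nonneg hfl0)
    have h1 : (n : ℝ) ≤ t / s := hnR ▸ Int.floor_le _
    have h2 : t / s < (n : ℝ) + 1 := by rw [hnR]; push_cast; exact Int.lt_floor_add_one _
    have h1' : (n : ℝ) * s ≤ t := (le_div_iff₀ hp1).mp h1
    have h2' : t < ((n : ℝ) + 1) * s := (div_lt_iff₀ hp1).mp h2
    refine ⟨n * kp, n * ℓp, ?_⟩
    have hval : ((n * kp : ℕ) : ℝ) * a + ((n * ℓp : ℕ) : ℝ) * b = (n : ℝ) * s := by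
      push_cast; rw [hs_def]; ring
    rw [hval, abs_lt]
    constructor <;> nlinarith
  · -- use negative small element
    set s : ℝ := (km : ℝ) * a + (ℓm : ℝ) * b with hs_def
    set n : ℕ := (⌊t / s⌋).toNat with hn_def
    have hfl0 : (0:ℤ) ≤ ⌊t / s⌋ :=
      Int.floor_nonneg.mpr (le_of_lt (div_pos_of_neg_of_neg ht hm2))
    have hnR : (n : ℝ) = (⌊t / s⌋ : ℝ) := by
      rw [hn_def]
      exact_mod_cast congrArg (Int.cast : ℤ → ℝ) (Int.toNat_of_nonneg hfl0)
    have h1 : (n : ℝ) ≤ t / s := hnR ▸ Int.floor_le _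
    have h2 : t / s < (n : ℝ) + 1 := by rw [hnR]; push_cast; exact Int.lt_floor_add_one _
    have h1' : t ≤ (n : ℝ) * s := by
      rw [le_div_iff_of_neg hm2] at h1
      exact h1
    have h2' : ((n : ℝ) + 1) * s < t := by
      rw [div_lt_iff_of_neg hm2] at h2
      exact h2
    refine ⟨n * km, n * ℓm, ?_⟩
    have hval : ((n * km : ℕ) : ℝ) * a + ((n * ℓm : ℕ) : ℝ) * b = (n : ℝ) * s := by
      push_cast; rw [hs_def]; ring
    rw [hval, abs_lt]
    constructor <;> nlinarith


/-- If `(r, ρ) ∈ NC`, then the set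
`B₁(r,ρ) = {r ^ k * ρ ^ ℓ | k, ℓ non-negative integers}` is dense in `(0, ∞)`. -/
theorem b1_dense_of_neverConnect (r ρ : ℝ) (h : NeverConnect r ρ) :
    Dense {x : Set.Ioi (0 : ℝ) | ∃ k ℓ : ℕ, (x : ℝ) = r ^ k * ρ ^ ℓ} := by
  obtain ⟨hr0, hr1, hρ1, hNC⟩ := h
  have hρ0 : 0 < ρ := lt_trans one_pos hρ1
  set a := Real.log r with ha_def
  set b := Real.log ρ with hb_def
  have ha : a < 0 := Real.log_neg hr0 hr1
  have hb : 0 < b := Real.log_pos hρ1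
  have hirr : ∀ k ℓ : ℤ, (k : ℝ) * a = (ℓ : ℝ) * b → k = 0 ∧ ℓ = 0 := by
    intro k ℓ hkl
    apply (hNC k ℓ).mp
    have h1 : r ^ k = Real.exp ((k : ℝ) * a) := by
      rw [ha_def, ← Real.log_zpow, Real.exp_log (zpow_pos hr0 k)]
    have h2 : ρ ^ ℓ = Real.exp ((ℓ : ℝ) * b) := by
      rw [hb_def, ← Real.log_zpow, Real.exp_log (zpow_pos hρ0 ℓ)]
    rw [h1, h2, hkl]
  rw [Metric.dense_iff]
  intro x ε hε
  have hx : (0 : ℝ) < (x : ℝ) := x.2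
  have hcont : ContinuousAt Real.exp (Real.log x) := Real.continuous_exp.continuousAt
  rw [Metric.continuousAt_iff] at hcont
  obtain ⟨δ, hδ, hδ'⟩ := hcont ε hε
  obtain ⟨k, ℓ, hkl⟩ := exists_approx a b ha hb hirr (Real.log x) hδ
  have hmem : (0 : ℝ) < r ^ k * ρ ^ ℓ := by positivity
  refine ⟨⟨r ^ k * ρ ^ ℓ, hmem⟩, ?_, k, ℓ, rfl⟩
  rw [Metric.mem_ball, Subtype.dist_eq]
  have hexp : Real.exp ((k : ℝ) * a + (ℓ : ℝ) * b) = r ^ k * ρ ^ ℓ := by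
    rw [Real.exp_add, ha_def, hb_def, ← Real.log_pow, ← Real.log_pow,
      Real.exp_log (by positivity), Real.exp_log (by positivity)]
  have := @hδ' ((k : ℝ) * a + (ℓ : ℝ) * b) (by rwa [Real.dist_eq])
  rw [hexp, Real.exp_log hx] at this
  simpa [Real.dist_eq] using this
end

section
/- If (r,ρ) ∈ NC, then for each x ∈ (0,1) there are sequences (k_n) and (ℓ_n) of non-negative integers such that for each positive integer n, 1 − 1/(n+1) < x · r^{k_n} · ρ^{ℓ_n} < 1. -/
lemma nc_key (a b c δ : ℝ) (ha : 0 < a) (hb : 0 < b) (hc : 0 < c) (hδ : 0 < δ)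
    (hdense : Dense ((AddSubgroup.closure {a, b} : AddSubgroup ℝ) : Set ℝ)) :
    ∃ k ℓ : ℕ, c - δ < (ℓ : ℝ) * b - (k : ℝ) * a ∧ (ℓ : ℝ) * b - (k : ℝ) * a < c := by
  obtain ⟨g, hgS, hg⟩ := hdense.exists_mem_open isOpen_Ioo
    (Set.nonempty_Ioo.2 (lt_min hδ ha) : (Set.Ioo (0:ℝ) (min δ a)).Nonempty)
  obtain ⟨hg0, hgε⟩ := hg
  have hgδ : g < δ := lt_of_lt_of_le hgε (min_le_left _ _)
  have hga : g < a := lt_of_lt_of_le hgε (min_le_right _ _)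
  obtain ⟨p, q, hpq⟩ := AddSubgroup.mem_closure_pair.1 hgS
  simp only [zsmul_eq_mul] at hpq
  rcases le_or_gt p 0 with hp | hp
  · -- g = q*b - (-p)*a with q ≥ 0
    have hq : 0 ≤ q := by
      by_contra hq
      push_neg at hq
      have : (p:ℝ) * a + q * b ≤ 0 := by
        have h1 : (p:ℝ) * a ≤ 0 := mul_nonpos_of_nonpos_of_nonneg (by exact_mod_cast hp) ha.le
        have h2 : (q:ℝ) * b ≤ 0 := mul_nonpos_of_nonpos_of_nonneg
          (by exact_mod_cast hq.le) hb.le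
        linarith
      linarith [hpq ▸ this]
    -- multiples N*g land in (c-δ, c)
    set N : ℤ := ⌊(c - δ) / g⌋ + 1 with hN
    have hN1 : c - δ < (N : ℝ) * g := by
      have := Int.lt_floor_add_one ((c - δ) / g)
      have : (c - δ) / g < (N : ℝ) := by push_cast [hN]; linarith
      calc c - δ = (c - δ) / g * g := by field_simp
        _ < (N : ℝ) * g := by exact mul_lt_mul_of_pos_right this hg0
    have hN2 : (N : ℝ) * g < c := by
      have := Int.floor_le ((c - δ) / g)
      have hNle : (N : ℝ) ≤ (c - δ) / g + 1 := by push_cast [hN]; linarith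
      have : (N : ℝ) * g ≤ ((c - δ) / g + 1) * g := mul_le_mul_of_nonneg_right hNle hg0.le
      have heq : ((c - δ) / g + 1) * g = c - δ + g := by field_simp
      linarith
    set M : ℕ := N.toNat with hM
    have hMg : c - δ < (M : ℝ) * g ∧ (M : ℝ) * g < c := by
      rcases le_or_gt 0 N with h0 | h0
      · have : (M : ℝ) = (N : ℝ) := by exact_mod_cast Int.toNat_of_nonneg h0
        rw [this]; exact ⟨hN1, hN2⟩
      · have hM0 : M = 0 := Int.toNat_of_nonpos h0.le
        have hNg : (N : ℝ) * g < 0 := mul_neg_of_neg_of_pos (by exact_mod_cast h0) hg0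
        rw [hM0]
        constructor
        · push_cast; linarith
        · push_cast; linarith
    have hpe : ((-p).toNat : ℝ) = -(p : ℝ) := by
      exact_mod_cast Int.toNat_of_nonneg (by linarith : (0:ℤ) ≤ -p)
    have hqe : ((q).toNat : ℝ) = (q : ℝ) := by exact_mod_cast Int.toNat_of_nonneg hq
    have hrep : ((M * q.toNat : ℕ) : ℝ) * b - ((M * (-p).toNat : ℕ) : ℝ) * a = (M:ℝ) * g := by
      push_cast [hpe, hqe]
      rw [← hpq]; ring
    exact ⟨M * (-p).toNat, M * q.toNat, by rw [hrep]; exact hMg.1, by rw [hrep]; exact hMg.2⟩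
  · -- p ≥ 1 ; then q ≤ 0
    have hq : q ≤ 0 := by
      by_contra hq
      push_neg at hq
      have h1 : a ≤ (p:ℝ) * a := le_mul_of_one_le_left ha.le (by exact_mod_cast hp)
      have h2 : (0:ℝ) < (q:ℝ) * b := mul_pos (by exact_mod_cast hq) hb
      have : a < g := by rw [← hpq]; linarith
      linarith
    -- pick M with M*b > c, then subtract copies of g
    obtain ⟨M, hMb⟩ := exists_nat_gt (c / b)
    have hMb' : c < (M : ℝ) * b := by
      calc c = c / b * b := by field_simp
        _ < (M : ℝ) * b := by exact mul_lt_mul_of_pos_right hMb hb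
    set N : ℤ := ⌊((M : ℝ) * b - c) / g⌋ + 1 with hN
    have hN0 : 0 ≤ N := by
      have : (0:ℝ) ≤ ((M : ℝ) * b - c) / g := div_nonneg (by linarith) hg0.le
      have := Int.le_floor.2 (by exact_mod_cast this : ((0:ℤ):ℝ) ≤ ((M : ℝ) * b - c) / g)
      omega
    have hN1 : c ≤ (M:ℝ) * b - ((N : ℝ) - 1) * g := by
      have hfl := Int.floor_le (((M : ℝ) * b - c) / g)
      have : ((N : ℝ) - 1) ≤ ((M : ℝ) * b - c) / g := by push_cast [hN]; linarith
      have := mul_le_mul_of_nonneg_right this hg0.le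
      have heq : ((M : ℝ) * b - c) / g * g = (M : ℝ) * b - c := by field_simp
      linarith
    have hN2 : (M:ℝ) * b - (N : ℝ) * g < c := by
      have := Int.lt_floor_add_one (((M : ℝ) * b - c) / g)
      have hlt : ((M : ℝ) * b - c) / g < (N : ℝ) := by push_cast [hN]; linarith
      have := mul_lt_mul_of_pos_right hlt hg0
      have heq : ((M : ℝ) * b - c) / g * g = (M : ℝ) * b - c := by field_simp
      linarith
    have hN3 : c - δ < (M:ℝ) * b - (N : ℝ) * g := by nlinarith
    have hpe : ((p).toNat : ℝ) = (p : ℝ) := by exact_mod_cast Int.toNat_of_nonneg hp.le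
    have hqe : ((-q).toNat : ℝ) = -(q : ℝ) := by
      exact_mod_cast Int.toNat_of_nonneg (by linarith : (0:ℤ) ≤ -q)
    have hNe : ((N.toNat : ℕ) : ℝ) = (N : ℝ) := by exact_mod_cast Int.toNat_of_nonneg hN0
    have hrep : ((M + N.toNat * (-q).toNat : ℕ) : ℝ) * b - ((N.toNat * p.toNat : ℕ) : ℝ) * a
        = (M : ℝ) * b - (N : ℝ) * g := by
      push_cast [hpe, hqe, hNe]
      rw [← hpq]; ring
    exact ⟨N.toNat * p.toNat, M + N.toNat * (-q).toNat,
      by rw [hrep]; exact hN3, by rw [hrep]; exact hN2⟩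

/-- If `(r, ρ) ∈ NC`, then for each `x ∈ (0, 1)` there are sequences `(k n)` and `(ℓ n)`
of non-negative integers such that for each positive integer `n`,
`1 - 1/(n+1) < x * r ^ (k n) * ρ ^ (ℓ n) < 1`. -/
theorem exists_powers_close_to_one_of_neverConnect (r ρ : ℝ) (h : NeverConnect r ρ)
    (x : ℝ) (hx : x ∈ Set.Ioo (0 : ℝ) 1) :
    ∃ k ℓ : ℕ → ℕ, ∀ n : ℕ, 0 < n →
      1 - 1 / ((n : ℝ) + 1) < x * r ^ (k n) * ρ ^ (ℓ n) ∧
        x * r ^ (k n) * ρ ^ (ℓ n) < 1 := by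
  obtain ⟨hr0, hr1, hρ1, hnc⟩ := h
  obtain ⟨hx0, hx1⟩ := hx
  set a : ℝ := -Real.log r with haa
  set b : ℝ := Real.log ρ with hbb
  have ha : 0 < a := by
    have := Real.log_neg hr0 hr1
    simp [haa]; linarith
  have hb : 0 < b := Real.log_pos hρ1
  have hc : 0 < -Real.log x := by
    have := Real.log_neg hx0 hx1
    linarith
  -- the subgroup generated by a and b is dense
  have hdense : Dense ((AddSubgroup.closure {a, b} : AddSubgroup ℝ) : Set ℝ) := by
    rcases AddSubgroup.dense_or_cyclic (AddSubgroup.closure {a, b}) with hd | ⟨a₀, hcyc⟩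
    · exact hd
    · exfalso
      have haS : a ∈ AddSubgroup.closure ({a, b} : Set ℝ) :=
        AddSubgroup.subset_closure (by simp)
      have hbS : b ∈ AddSubgroup.closure ({a, b} : Set ℝ) :=
        AddSubgroup.subset_closure (by simp)
      rw [hcyc, AddSubgroup.mem_closure_singleton] at haS hbS
      obtain ⟨m, hm⟩ := haS
      obtain ⟨n, hn⟩ := hbS
      have hkey : (n : ℝ) * a = (m : ℝ) * b := by
        rw [← hm, ← hn]
        push_cast [zsmul_eq_mul]
        ring
      have hlog : Real.log (r ^ (-n : ℤ)) = Real.log (ρ ^ (m : ℤ)) := by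
        rw [Real.log_zpow, Real.log_zpow]
        push_cast
        have : (n : ℝ) * (-Real.log r) = (m : ℝ) * Real.log ρ := hkey
        linarith
      have hpow : r ^ (-n : ℤ) = ρ ^ (m : ℤ) := by
        have h1 : (0:ℝ) < r ^ (-n : ℤ) := zpow_pos hr0 _
        have h2 : (0:ℝ) < ρ ^ (m : ℤ) := zpow_pos (by linarith) _
        exact Real.log_injOn_pos (Set.mem_Ioi.mpr h1) (Set.mem_Ioi.mpr h2) hlog
      obtain ⟨hn0, hm0⟩ := (hnc _ _).1 hpow
      rw [hm0] at hm
      simp at hm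
      linarith [hm ▸ ha]
  -- for each n, find suitable k, ℓ
  have key : ∀ n : ℕ, 0 < n → ∃ k ℓ : ℕ,
      1 - 1 / ((n : ℝ) + 1) < x * r ^ k * ρ ^ ℓ ∧ x * r ^ k * ρ ^ ℓ < 1 := by
    intro n hn
    set ε : ℝ := 1 - 1 / ((n : ℝ) + 1) with hε
    have hn1 : (1:ℝ) ≤ (n : ℝ) := by exact_mod_cast hn
    have hε0 : 0 < ε := by
      rw [hε]
      have h1 : 1 / ((n : ℝ) + 1) < 1 := by
        rw [div_lt_one (by positivity)]
        linarith
      linarith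
    have hε1 : ε < 1 := by
      rw [hε]
      have : 0 < 1 / ((n : ℝ) + 1) := by positivity
      linarith
    set δ : ℝ := -Real.log ε with hδδ
    have hδ : 0 < δ := by
      have := Real.log_neg hε0 hε1
      simp [hδδ]; linarith
    obtain ⟨k, ℓ, h1, h2⟩ := nc_key a b (-Real.log x) δ ha hb hc hδ hdense
    refine ⟨k, ℓ, ?_, ?_⟩
    · have hval : x * r ^ k * ρ ^ ℓ =
          Real.exp (Real.log x + (k:ℝ) * Real.log r + (ℓ:ℝ) * Real.log ρ) := by
        rw [Real.exp_add, Real.exp_add, Real.exp_log hx0,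
          ← Real.log_pow, ← Real.log_pow, Real.exp_log (pow_pos hr0 _),
          Real.exp_log (pow_pos (by linarith : (0:ℝ) < ρ) _)]
      rw [hval]
      have : -δ < Real.log x + (k:ℝ) * Real.log r + (ℓ:ℝ) * Real.log ρ := by
        simp only [haa, hbb] at h1
        linarith
      calc ε = Real.exp (-δ) := by rw [hδδ]; simp [Real.exp_log hε0]
        _ < _ := Real.exp_lt_exp.2 this
    · have hval : x * r ^ k * ρ ^ ℓ =
          Real.exp (Real.log x + (k:ℝ) * Real.log r + (ℓ:ℝ) * Real.log ρ) := by
        rw [Real.exp_add, Real.exp_add, Real.exp_log hx0,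
          ← Real.log_pow, ← Real.log_pow, Real.exp_log (pow_pos hr0 _),
          Real.exp_log (pow_pos (by linarith : (0:ℝ) < ρ) _)]
      rw [hval]
      have : Real.log x + (k:ℝ) * Real.log r + (ℓ:ℝ) * Real.log ρ < 0 := by
        simp only [haa, hbb] at h2
        linarith
      calc Real.exp _ < Real.exp 0 := Real.exp_lt_exp.2 this
        _ = 1 := Real.exp_zero
  choose! k ℓ hkℓ using key
  exact ⟨k, ℓ, hkℓ⟩
end

section
/- If (r,ρ) ∈ NC, then for each x ∈ (0,1) there is a sequence a ∈ {r,ρ}^ℕ such that for each positive integer n the product (a₁·a₂·a₃·…·a_n)·x lies in [0,1], and the supremum of the set {(a₁·a₂·a₃·…·a_n)·x | n is a positive integer} equals 1. -/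
noncomputable def gSeq (α β y0 : ℝ) : ℕ → ℝ
  | 0 => y0
  | n + 1 => if β ≤ gSeq α β y0 n then gSeq α β y0 n - β else gSeq α β y0 n + α

/-- `t` reduced modulo `β` into `[0, β)`. -/
noncomputable def modF (β t : ℝ) : ℝ := β * Int.fract (t / β)

lemma modF_spec {β : ℝ} (hβ : 0 < β) (t : ℝ) : modF β t = t - β * ⌊t / β⌋ := by
  unfold modF Int.fract
  rw [mul_sub, mul_div_cancel₀ _ hβ.ne']

lemma modF_nonneg {β : ℝ} (hβ : 0 < β) (t : ℝ) : 0 ≤ modF β t :=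
  mul_nonneg hβ.le (Int.fract_nonneg _)

lemma modF_lt {β : ℝ} (hβ : 0 < β) (t : ℝ) : modF β t < β := by
  have h := Int.fract_lt_one (t / β)
  calc β * Int.fract (t / β) < β * 1 := (mul_lt_mul_iff_right₀ hβ).mpr h
    _ = β := mul_one β

lemma modF_eq_self {β : ℝ} (hβ : 0 < β) {t : ℝ} (h0 : 0 ≤ t) (h1 : t < β) : modF β t = t := by
  unfold modF
  rw [Int.fract_eq_self.mpr ⟨div_nonneg h0 hβ.le, (div_lt_one hβ).mpr h1⟩,
    mul_div_cancel₀ _ hβ.ne']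

lemma modF_add_int_mul {β : ℝ} (hβ : 0 < β) (k : ℤ) (t : ℝ) :
    modF β (t + k * β) = modF β t := by
  unfold modF
  have : (t + k * β) / β = t / β + k := by field_simp
  rw [this, Int.fract_add_intCast]

lemma modF_sub_self {β : ℝ} (hβ : 0 < β) (t : ℝ) : modF β (t - β) = modF β t := by
  have h := modF_add_int_mul hβ (-1) t
  push_cast at h
  rw [← h]; ring_nf

lemma modF_modF_add {β : ℝ} (hβ : 0 < β) (t s : ℝ) :
    modF β (modF β t + s) = modF β (t + s) := by
  rw [modF_spec hβ t]
  have h := modF_add_int_mul hβ (-⌊t / β⌋) (t + s)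
  push_cast at h
  rw [← h]; ring_nf

section gseq
variable {α β y0 : ℝ}

lemma gSeq_nonneg (hα : 0 < α) (hy0 : 0 ≤ y0) : ∀ n, 0 ≤ gSeq α β y0 n
  | 0 => hy0
  | n + 1 => by
    have ih := gSeq_nonneg hα hy0 n
    simp only [gSeq]
    split
    · linarith
    · linarith

lemma gSeq_reduce (hα : 0 < α) (hβ : 0 < β) (hy0 : 0 ≤ y0) :
    ∀ k n : ℕ, gSeq α β y0 n < β * (k + 1) →
      ∃ m, n ≤ m ∧ gSeq α β y0 m = modF β (gSeq α β y0 n) := by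
  intro k
  induction k with
  | zero =>
    intro n hn
    refine ⟨n, le_refl n, ?_⟩
    rw [modF_eq_self hβ (gSeq_nonneg hα hy0 n) (by push_cast at hn; linarith)]
  | succ k ih =>
    intro n hn
    by_cases hlt : gSeq α β y0 n < β
    · exact ⟨n, le_refl n, (modF_eq_self hβ (gSeq_nonneg hα hy0 n) hlt).symm⟩
    · push_neg at hlt
      have hstep : gSeq α β y0 (n + 1) = gSeq α β y0 n - β := by
        simp only [gSeq]; rw [if_pos hlt]
      have hlt' : gSeq α β y0 (n + 1) < β * (k + 1) := by
        rw [hstep]; push_cast at hn ⊢; nlinarith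
      obtain ⟨m, hm, hme⟩ := ih (n + 1) hlt'
      refine ⟨m, by omega, ?_⟩
      rw [hme, hstep, modF_sub_self hβ]

lemma gSeq_reduce' (hα : 0 < α) (hβ : 0 < β) (hy0 : 0 ≤ y0) (n : ℕ) :
    ∃ m, n ≤ m ∧ gSeq α β y0 m = modF β (gSeq α β y0 n) := by
  obtain ⟨k, hk⟩ := exists_nat_gt (gSeq α β y0 n / β)
  refine gSeq_reduce hα hβ hy0 k n ?_
  have := (div_lt_iff₀ hβ).mp hk
  push_cast
  nlinarith

lemma gSeq_visits (hα : 0 < α) (hβ : 0 < β) (hy0 : 0 ≤ y0) :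
    ∀ j : ℕ, ∃ n, 1 ≤ n ∧ gSeq α β y0 n = modF β (gSeq α β y0 1 + j * α) := by
  intro j
  induction j with
  | zero =>
    obtain ⟨m, hm, hme⟩ := gSeq_reduce' hα hβ hy0 1
    exact ⟨m, hm, by simpa using hme⟩
  | succ j ih =>
    obtain ⟨n, hn1, hne⟩ := ih
    have hlt : gSeq α β y0 n < β := hne ▸ modF_lt hβ _
    have hstep : gSeq α β y0 (n + 1) = gSeq α β y0 n + α := by
      simp only [gSeq]; rw [if_neg (not_le.mpr hlt)]
    obtain ⟨m, hm, hme⟩ := gSeq_reduce' hα hβ hy0 (n + 1)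
    refine ⟨m, by omega, ?_⟩
    rw [hme, hstep, hne, modF_modF_add hβ]
    push_cast
    ring_nf

end gseq

lemma orbit_small {α β : ℝ} (hα : 0 < α) (hβ : 0 < β)
    (hirr : ∀ k ℓ : ℤ, (k : ℝ) * α = (ℓ : ℝ) * β → k = 0 ∧ ℓ = 0)
    (c : ℝ) {ε : ℝ} (hε : 0 < ε) : ∃ j : ℕ, modF β (c + j * α) < ε := by
  set O : ℕ → ℝ := fun j => modF β (c + j * α) with hO
  -- injectivity
  have hinj : Function.Injective O := by
    intro i j hij
    have hi := modF_spec hβ (c + i * α)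
    have hj := modF_spec hβ (c + j * α)
    have h : ((((i : ℤ) - (j : ℤ)) : ℤ) : ℝ) * α =
        ((⌊(c + i * α) / β⌋ - ⌊(c + j * α) / β⌋ : ℤ) : ℝ) * β := by
      simp only [hO] at hij
      rw [hi, hj] at hij
      push_cast
      linarith
    have := hirr _ _ h
    omega
  set ε' : ℝ := min ε β with hε'
  have hε'0 : 0 < ε' := lt_min hε hβ
  -- key step: from a close pair, produce a small orbit point
  have key : ∀ i j : ℕ, i < j → |O j - O i| < ε' → ∃ j', O j' < ε := by
    intro i j hij hclose
    set δ : ℝ := O j - O i with hδdef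
    have hδne : δ ≠ 0 := sub_ne_zero.mpr fun e => (Nat.lt_irrefl i (hinj e ▸ hij))
    set K : ℤ := ⌊(c + j * α) / β⌋ - ⌊(c + i * α) / β⌋ with hK
    set d : ℕ := j - i with hd
    have hdpos : 0 < d := Nat.sub_pos_of_lt hij
    have hdα : (d : ℝ) * α = δ + (K : ℝ) * β := by
      have hi := modF_spec hβ (c + i * α)
      have hj := modF_spec hβ (c + j * α)
      simp only [hδdef, hO, hK, hd]
      rw [hi, hj]
      push_cast [Nat.cast_sub hij.le]
      ring
    have horb : ∀ t : ℕ, O (j + t * d) = modF β (O j + t * δ) := by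
      intro t
      have e2 : modF β (modF β (c + j * α) + (t : ℝ) * δ)
          = modF β ((c + j * α) + (t : ℝ) * δ) := modF_modF_add hβ _ _
      have e3 : (c + j * α) + (t : ℝ) * δ
          = (c + ((j + t * d : ℕ) : ℝ) * α) + ((-(t * K) : ℤ) : ℝ) * β := by
        push_cast
        linear_combination -(t : ℝ) * hdα
      calc O (j + t * d) = modF β (c + ((j + t * d : ℕ) : ℝ) * α) := rfl
        _ = modF β ((c + ((j + t * d : ℕ) : ℝ) * α) + ((-(t * K) : ℤ) : ℝ) * β) :=
            (modF_add_int_mul hβ _ _).symm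
        _ = modF β ((c + j * α) + (t : ℝ) * δ) := by rw [← e3]
        _ = modF β (O j + t * δ) := by rw [← e2]
    have hOj0 : 0 ≤ O j := modF_nonneg hβ _
    have hOjβ : O j < β := modF_lt hβ _
    rcases hδne.lt_or_gt with hneg | hpos
    · -- δ < 0 : walk down to [0, -δ)
      have hmδ : 0 < -δ := neg_pos.mpr hneg
      set t : ℕ := ⌊O j / (-δ)⌋₊ with ht
      have h1 : (t : ℝ) * (-δ) ≤ O j := by
        have := Nat.floor_le (div_nonneg hOj0 hmδ.le)
        calc (t : ℝ) * (-δ) ≤ (O j / (-δ)) * (-δ) := by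
              exact mul_le_mul_of_nonneg_right this hmδ.le
          _ = O j := div_mul_cancel₀ _ hmδ.ne'
      have h2 : O j < ((t : ℝ) + 1) * (-δ) := by
        have := Nat.lt_floor_add_one (O j / (-δ))
        calc O j = (O j / (-δ)) * (-δ) := (div_mul_cancel₀ _ hmδ.ne').symm
          _ < ((t : ℝ) + 1) * (-δ) := by exact mul_lt_mul_of_pos_right this hmδ
      refine ⟨j + t * d, ?_⟩
      have hv0 : 0 ≤ O j + t * δ := by nlinarith
      have hvlt : O j + t * δ < -δ := by nlinarith
      have hvβ : O j + t * δ < β := by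
        have : |δ| < β := lt_of_lt_of_le hclose (min_le_right _ _)
        have := abs_lt.mp this
        linarith
      rw [horb t, modF_eq_self hβ hv0 hvβ]
      have : -δ ≤ |δ| := neg_le_abs δ
      have hδε : |δ| < ε := lt_of_lt_of_le hclose (min_le_left _ _)
      linarith
    · -- δ > 0 : walk up past β and wrap
      set t : ℕ := ⌈(β - O j) / δ⌉₊ with ht
      have hq0 : 0 ≤ (β - O j) / δ := div_nonneg (by linarith) hpos.le
      have h1 : β - O j ≤ (t : ℝ) * δ := by
        have := Nat.le_ceil ((β - O j) / δ)
        calc β - O j = ((β - O j) / δ) * δ := (div_mul_cancel₀ _ hpos.ne').symm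
          _ ≤ (t : ℝ) * δ := mul_le_mul_of_nonneg_right this hpos.le
      have h2 : (t : ℝ) * δ < β - O j + δ := by
        have := Nat.ceil_lt_add_one hq0
        calc (t : ℝ) * δ < ((β - O j) / δ + 1) * δ := mul_lt_mul_of_pos_right this hpos
          _ = β - O j + δ := by field_simp
      refine ⟨j + t * d, ?_⟩
      have hδβ : δ < β := by
        have : |δ| < β := lt_of_lt_of_le hclose (min_le_right _ _)
        have := abs_lt.mp this
        linarith
      have hu : O j + (t : ℝ) * δ - β < δ := by linarith
      have hu0 : 0 ≤ O j + (t : ℝ) * δ - β := by linarith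
      have : modF β (O j + t * δ) = O j + t * δ - β := by
        rw [← modF_sub_self hβ, modF_eq_self hβ hu0 (by linarith)]
      rw [horb t, this]
      have hδε : δ ≤ |δ| := le_abs_self δ
      have : |δ| < ε := lt_of_lt_of_le hclose (min_le_left _ _)
      linarith
  -- pigeonhole
  set N : ℕ := ⌈β / ε'⌉₊ with hN
  have hmaps : ∀ j ∈ Finset.range (N + 1), ⌊O j / ε'⌋₊ ∈ Finset.range N := by
    intro j _
    rw [Finset.mem_range, Nat.floor_lt (div_nonneg (modF_nonneg hβ _) hε'0.le)]
    calc O j / ε' < β / ε' := (div_lt_div_iff_of_pos_right hε'0).mpr (modF_lt hβ _)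
      _ ≤ N := Nat.le_ceil _
  obtain ⟨i, hi, j, hj, hne, heq⟩ :=
    Finset.exists_ne_map_eq_of_card_lt_of_maps_to
      (by simp [Finset.card_range]) hmaps
  have hclose : ∀ i j : ℕ, ⌊O i / ε'⌋₊ = ⌊O j / ε'⌋₊ → |O j - O i| < ε' := by
    intro i j hfe
    have hi0 : 0 ≤ O i / ε' := div_nonneg (modF_nonneg hβ _) hε'0.le
    have hj0 : 0 ≤ O j / ε' := div_nonneg (modF_nonneg hβ _) hε'0.le
    have h1 : (⌊O i / ε'⌋₊ : ℝ) ≤ O i / ε' := Nat.floor_le hi0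
    have h2 : O i / ε' < ⌊O i / ε'⌋₊ + 1 := Nat.lt_floor_add_one _
    have h3 : (⌊O j / ε'⌋₊ : ℝ) ≤ O j / ε' := Nat.floor_le hj0
    have h4 : O j / ε' < ⌊O j / ε'⌋₊ + 1 := Nat.lt_floor_add_one _
    rw [hfe] at h1 h2
    have hsub : O i - O j < ε' := by
      have h5 : O i / ε' - O j / ε' < 1 := by linarith
      have h6 := mul_lt_mul_of_pos_right h5 hε'0
      rw [sub_mul, div_mul_cancel₀ _ hε'0.ne', div_mul_cancel₀ _ hε'0.ne', one_mul] at h6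
      linarith
    have hsub' : O j - O i < ε' := by
      have h5 : O j / ε' - O i / ε' < 1 := by linarith
      have h6 := mul_lt_mul_of_pos_right h5 hε'0
      rw [sub_mul, div_mul_cancel₀ _ hε'0.ne', div_mul_cancel₀ _ hε'0.ne', one_mul] at h6
      linarith
    rw [abs_lt]
    constructor <;> linarith
  rcases hne.lt_or_gt with hij | hij
  · exact key i j hij (hclose i j heq)
  · exact key j i hij (by rw [abs_sub_comm]; exact hclose i j heq)

/-- If `(r, ρ) ∈ NC`, then for each `x ∈ (0, 1)` there is a sequence `a ∈ {r, ρ}^ℕ`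
such that for each positive integer `n` the product `(a₁ ⋯ aₙ) * x` lies in `[0, 1]`,
and `sup { (a₁ ⋯ aₙ) * x | n a positive integer } = 1`. -/
theorem exists_sequence_sup_one_of_neverConnect (r ρ : ℝ) (h : NeverConnect r ρ)
    (x : ℝ) (hx : x ∈ Set.Ioo (0 : ℝ) 1) :
    ∃ a : ℕ → ℝ, (∀ n, a n = r ∨ a n = ρ) ∧
      (∀ n : ℕ, 0 < n → (∏ i ∈ Finset.range n, a i) * x ∈ Set.Icc (0 : ℝ) 1) ∧
      sSup {y : ℝ | ∃ n : ℕ, 0 < n ∧ y = (∏ i ∈ Finset.range n, a i) * x} = 1 := by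
  obtain ⟨hr0, hr1, hρ1, hnc⟩ := h
  obtain ⟨hx0, hx1⟩ := hx
  have hρ0 : (0 : ℝ) < ρ := lt_trans one_pos hρ1
  set α : ℝ := -Real.log r with hα_def
  set β : ℝ := Real.log ρ with hβ_def
  have hα : 0 < α := by have := Real.log_neg hr0 hr1; simp only [hα_def]; linarith
  have hβ : 0 < β := Real.log_pos hρ1
  set y0 : ℝ := -Real.log x with hy0_def
  have hy0 : 0 ≤ y0 := by have := Real.log_neg hx0 hx1; simp only [hy0_def]; linarith
  have hirr : ∀ k ℓ : ℤ, (k : ℝ) * α = (ℓ : ℝ) * β → k = 0 ∧ ℓ = 0 := by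
    intro k ℓ hkl
    have h1 : Real.log (r ^ (-k : ℤ)) = Real.log (ρ ^ ℓ) := by
      rw [Real.log_zpow, Real.log_zpow]
      simp only [hα_def, hβ_def] at hkl
      push_cast
      linarith
    have h2 : r ^ (-k : ℤ) = ρ ^ ℓ := by
      have hrp : (0 : ℝ) < r ^ (-k : ℤ) := zpow_pos hr0 _
      have hρp : (0 : ℝ) < ρ ^ ℓ := zpow_pos hρ0 _
      rw [← Real.exp_log hrp, ← Real.exp_log hρp, h1]
    have := (hnc _ _).mp h2
    omega
  set Y : ℕ → ℝ := gSeq α β y0 with hY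
  set a : ℕ → ℝ := fun n => if β ≤ Y n then ρ else r with ha
  have hprod : ∀ n, (∏ i ∈ Finset.range n, a i) * x = Real.exp (-(Y n)) := by
    intro n
    induction n with
    | zero =>
      simp only [Finset.range_zero, Finset.prod_empty, one_mul, hY]
      show x = Real.exp (-(gSeq α β y0 0))
      simp only [gSeq, hy0_def, neg_neg, Real.exp_log hx0]
    | succ n ih =>
      have hsplit : (∏ i ∈ Finset.range (n + 1), a i) * x
          = ((∏ i ∈ Finset.range n, a i) * x) * a n := by
        rw [Finset.prod_range_succ]; ring
      rw [hsplit, ih]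
      by_cases hb : β ≤ Y n
      · have han : a n = ρ := by simp only [ha]; rw [if_pos hb]
        have hYs : Y (n + 1) = Y n - β := by
          show gSeq α β y0 (n + 1) = _
          simp only [gSeq]; rw [if_pos hb]
        rw [han, hYs, show ρ = Real.exp β from (Real.exp_log hρ0).symm, ← Real.exp_add]
        congr 1; ring
      · have han : a n = r := by simp only [ha]; rw [if_neg hb]
        have hYs : Y (n + 1) = Y n + α := by
          show gSeq α β y0 (n + 1) = _
          simp only [gSeq]; rw [if_neg hb]
        have hrexp : r = Real.exp (-α) := by
          simp only [hα_def, neg_neg]; exact (Real.exp_log hr0).symm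
        rw [han, hYs, hrexp, ← Real.exp_add]
        congr 1; ring
  have hYnonneg : ∀ n, 0 ≤ Y n := gSeq_nonneg hα hy0
  refine ⟨a, ?_, ?_, ?_⟩
  · intro n
    by_cases hb : β ≤ Y n
    · exact Or.inr (by simp only [ha]; rw [if_pos hb])
    · exact Or.inl (by simp only [ha]; rw [if_neg hb])
  · intro n _
    rw [hprod n]
    exact ⟨(Real.exp_pos _).le, Real.exp_le_one_iff.mpr (by linarith [hYnonneg n])⟩
  · have hbdd : BddAbove {y : ℝ | ∃ n : ℕ, 0 < n ∧ y = (∏ i ∈ Finset.range n, a i) * x} := by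
      refine ⟨1, ?_⟩
      rintro y ⟨n, hn, rfl⟩
      rw [hprod n]
      exact Real.exp_le_one_iff.mpr (by linarith [hYnonneg n])
    apply le_antisymm
    · refine Real.sSup_le ?_ one_pos.le
      rintro y ⟨n, hn, rfl⟩
      rw [hprod n]
      exact Real.exp_le_one_iff.mpr (by linarith [hYnonneg n])
    · refine le_of_forall_lt fun w hw => ?_
      obtain ⟨n, hn1, hyn⟩ : ∃ n, 1 ≤ n ∧ w < Real.exp (-(Y n)) := by
        rcases le_or_gt w 0 with hw0 | hw0
        · exact ⟨1, le_refl 1, lt_of_le_of_lt hw0 (Real.exp_pos _)⟩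
        · have hε : 0 < -Real.log w := by
            have := Real.log_neg hw0 hw; linarith
          obtain ⟨j, hj⟩ := orbit_small hα hβ hirr (Y 1) hε
          obtain ⟨n, hn1, hne⟩ := gSeq_visits hα hβ hy0 j
          rw [← hY] at hne
          refine ⟨n, hn1, ?_⟩
          have hYn : Y n < -Real.log w := by rw [hne]; exact hj
          calc w = Real.exp (Real.log w) := (Real.exp_log hw0).symm
            _ < Real.exp (-(Y n)) := Real.exp_lt_exp.mpr (by linarith)
      exact lt_of_lt_of_le hyn (le_csSup hbdd ⟨n, hn1, (hprod n).symm⟩)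
end

section
/- Let (r,ρ) ∈ NC, let k₁, ℓ₁, ℓ₂ be positive integers, set x = r^{−k₁}·ρ^{−ℓ₁} and y = r^{−k₁}·ρ^{−ℓ₂}, and suppose x < y and that the open interval (x,y) contains no point of B₁(r,ρ). Then there are a positive integer k and a non-negative integer ℓ such that r^k·ρ^ℓ < x < y < r^k·ρ^{ℓ+1}. -/
/-- Let `(r, ρ) ∈ NC`, let `k₁, ℓ₁, ℓ₂` be positive integers, set
`x = r ^ (-k₁) * ρ ^ (-ℓ₁)` and `y = r ^ (-k₁) * ρ ^ (-ℓ₂)`, and suppose `x < y` and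
that `(x, y)` contains no point of `B₁(r,ρ) = {r ^ k * ρ ^ ℓ | k, ℓ ≥ 0}`. Then there
are a positive integer `k` and a non-negative integer `ℓ` with
`r ^ k * ρ ^ ℓ < x < y < r ^ k * ρ ^ (ℓ + 1)`. -/
theorem claim_one (r ρ : ℝ) (h : NeverConnect r ρ)
    (k₁ ℓ₁ ℓ₂ : ℤ) (hk₁ : 0 < k₁) (hℓ₁ : 0 < ℓ₁) (hℓ₂ : 0 < ℓ₂)
    (x y : ℝ) (hx : x = r ^ (-k₁) * ρ ^ (-ℓ₁)) (hy : y = r ^ (-k₁) * ρ ^ (-ℓ₂))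
    (hxy : x < y)
    (hempty : ∀ z ∈ Set.Ioo x y, ¬∃ k ℓ : ℕ, z = r ^ k * ρ ^ ℓ) :
    ∃ (k : ℕ) (ℓ : ℕ), 0 < k ∧ r ^ k * ρ ^ ℓ < x ∧ y < r ^ k * ρ ^ (ℓ + 1) := by
  obtain ⟨hr0, hr1, hρ1, hnc⟩ := h
  have hρ0 : (0:ℝ) < ρ := lt_trans one_pos hρ1
  have hrne : (r:ℝ) ≠ 0 := hr0.ne'
  have hρne : (ρ:ℝ) ≠ 0 := hρ0.ne'
  have hxpos : 0 < x := by
    rw [hx]; positivity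
  -- no point of B₁ equals r^(-k₁)*ρ^(-m)
  have key : ∀ (k ℓ : ℕ) (m : ℤ), 0 < k →
      (r:ℝ) ^ k * ρ ^ ℓ ≠ r ^ (-k₁) * ρ ^ (-m) := by
    intro k ℓ m hk heq
    have heq' : r ^ (k:ℤ) * ρ ^ (ℓ:ℤ) = r ^ (-k₁) * ρ ^ (-m) := by
      rw [zpow_natCast, zpow_natCast]; exact heq
    have h1 : r ^ ((k:ℤ) + k₁) = ρ ^ (-m - (ℓ:ℤ)) := by
      have e1 : r ^ ((k:ℤ) + k₁) = r ^ (k:ℤ) * r ^ k₁ := zpow_add₀ hrne _ _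
      have e2 : ρ ^ (-m - (ℓ:ℤ)) = ρ ^ (-m) / ρ ^ (ℓ:ℤ) := zpow_sub₀ hρne _ _
      have e3 : r ^ (-k₁) = (r ^ k₁)⁻¹ := zpow_neg r k₁
      have hℓne : ρ ^ (ℓ:ℤ) ≠ 0 := zpow_ne_zero _ hρne
      have hk₁ne : r ^ (k₁:ℤ) ≠ 0 := zpow_ne_zero _ hrne
      rw [e1, e2]
      rw [e3] at heq'
      field_simp at heq' ⊢
      linear_combination heq'
    have := (hnc _ _).mp h1
    have hkk : (k:ℤ) + k₁ = 0 := this.1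
    have : (0:ℤ) < (k:ℤ) := by exact_mod_cast hk
    omega
  -- choose k with r^k < x
  obtain ⟨n, hn⟩ := exists_pow_lt_of_lt_one hxpos hr1
  set k := n + 1 with hkdef
  have hk : 0 < k := Nat.succ_pos n
  have hkx : r ^ k < x :=
    lt_of_le_of_lt (pow_le_pow_of_le_one hr0.le hr1.le (Nat.le_succ n)) hn
  -- least ℓ0 with x ≤ r^k * ρ^ℓ0
  have hex : ∃ m : ℕ, x ≤ r ^ k * ρ ^ m := by
    obtain ⟨n2, hn2⟩ := pow_unbounded_of_one_lt (x / r ^ k) hρ1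
    refine ⟨n2, ?_⟩
    have := (div_lt_iff₀ (pow_pos hr0 k)).mp hn2
    nlinarith
  set ℓ0 := Nat.find hex with hℓ0def
  have hℓ0 : x ≤ r ^ k * ρ ^ ℓ0 := Nat.find_spec hex
  have hℓ0pos : 0 < ℓ0 := by
    rcases Nat.eq_zero_or_pos ℓ0 with h0 | h0
    · rw [h0] at hℓ0; simp at hℓ0; linarith
    · exact h0
  set ℓ := ℓ0 - 1 with hℓdef
  have hℓ1 : ℓ + 1 = ℓ0 := Nat.succ_pred_eq_of_pos hℓ0pos
  have hlt : r ^ k * ρ ^ ℓ < x := by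
    have := Nat.find_min hex (show ℓ < ℓ0 by omega)
    push_neg at this
    exact this
  refine ⟨k, ℓ, hk, hlt, ?_⟩
  rw [hℓ1]
  rcases lt_trichotomy (r ^ k * ρ ^ ℓ0) y with hz | hz | hz
  · exfalso
    have hxz : x < r ^ k * ρ ^ ℓ0 := by
      rcases hℓ0.lt_or_eq with h' | h'
      · exact h'
      · exact absurd h'.symm (by rw [hx]; exact key k ℓ0 ℓ₁ hk)
    exact hempty _ ⟨hxz, hz⟩ ⟨k, ℓ0, rfl⟩
  · exfalso
    exact key k ℓ0 ℓ₂ hk (hz.trans hy)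
  · exact hz
end
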